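/- Let n ≥ 1 and let τ: [0,1] → ℝ be continuous and strictly increasing. Let d₀(Y;t) = Σ_{i=0}^n a_i·1{Y_i ≤ t < Y_{i+1}} (a_i ∈ ℝ) be an invariant target estimator and let w(Y;t) = Σ_{i=0}^n w_i·1{Y_i ≤ t < Y_{i+1}} with w_i ∈ (0,1] be an invariant weight. Let d₀*(Y;t) = Σ_{i=0}^n E[τ(T_i)]·1{Y_i ≤ t < Y_{i+1}} and define d_w* = w·d₀ + (1−w)·d₀*, i.e., the invariant estimator with weights w_i·a_i + (1−w_i)·E[τ(T_i)]. Then under the integrated balanced-loss risk R_{w,d₀}(d,F) = E_F[∫_ℝ { w·(d − d₀)² + (1−w)·(d − τ(F(t)))² } dF(t)], every invariant estimator d(Y;t) = Σ_{i=0}^n v_i·1{Y_i ≤ t < Y_{i+1}} (v_i ∈ ℝ) has risk constant in F and satisfying R_{w,d₀}(d,F) ≥ R_{w,d₀}(d_w*,F) for all continuous F, with equality if and only if v_i = w_i·a_i + (1−w_i)·E[τ(T_i)] for all i. -/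

import Mathlib

/-!
Given the sample, an invariant estimator takes the value `v i` on `{t | countLE x t = i}`, and
`countLE x t` is Binomial(`n`, `F t`), with probabilities the Bernstein polynomials at `F t`. For
continuous `F` the probability integral transform makes `F t` uniform on `(0, 1)` under `μ`, so by
Fubini the risk equals `∑ i, (n + 1)⁻¹ ∫₀¹ ℓᵢ(v i, τ u) f_{T_i}(u) du` with `ℓᵢ` the balanced loss:
it does not depend on `F`. The Beta density `f_{T_i}` integrates to `1`, so each summand is a
quadratic in `v i` with leading coefficient `1`, minimised at
`v*ᵢ = w i * a i + (1 - w i) * E[τ(T_i)]`; the excess risk is `∑ i, (v i - v*ᵢ)² / (n + 1)`.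
-/

open MeasureTheory Set
open scoped ENNReal NNReal

noncomputable section

/-- Number of sample points `x j ≤ t`, as an element of `Fin (n+1)`.
Note `countLE x t = i` iff `Y_i ≤ t < Y_{i+1}` where `Y_1 ≤ … ≤ Y_n` are the
order statistics of `x` and `Y_0 = -∞`, `Y_{n+1} = +∞`. -/
def countLE {n : ℕ} (x : Fin n → ℝ) (t : ℝ) : Fin (n + 1) :=
  ⟨(Finset.univ.filter (fun j => x j ≤ t)).card,
    Nat.lt_succ_of_le ((Finset.card_filter_le _ _).trans (by simp))⟩

/-- The invariant estimator `d(Y;t) = Σ_{i=0}^n u_i · 1{Y_i ≤ t < Y_{i+1}}`. -/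
def invEst {n : ℕ} (u : Fin (n + 1) → ℝ) : (Fin n → ℝ) → ℝ → ℝ :=
  fun x t => u (countLE x t)

/-- The cumulative distribution function of `μ`. -/
def cdfOf (μ : Measure ℝ) (t : ℝ) : ℝ := (μ (Set.Iic t)).toReal

/-- Distribution of an i.i.d. sample of size `n` from `μ`. -/
def sampleMeasure (n : ℕ) (μ : Measure ℝ) : Measure (Fin n → ℝ) :=
  Measure.pi fun _ => μ

/-- `(n+1)·C(n,i)·t^i·(1−t)^{n−i}`, the `Beta(i+1, n−i+1)` density on `(0,1)`. -/
def betaDen (n i : ℕ) (t : ℝ) : ℝ :=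
  ((n : ℝ) + 1) * (n.choose i) * t ^ i * (1 - t) ^ (n - i)


/-- `E[τ(T_i)] = ∫₀¹ τ(t)·f_{T_i}(t) dt`. -/
def betaMean (n : ℕ) (τ : ℝ → ℝ) (i : Fin (n + 1)) : ℝ :=
  ∫ t in Set.Ioo (0 : ℝ) 1, τ t * betaDen n i t

/-- Integrated balanced-loss risk
`R_{w,d₀}(d,F) = E_F[∫ { w·(d − d₀)² + (1−w)·(d − τ(F(t)))² } dF(t)]`
for invariant weight `w` and invariant target `d₀` with weights `a`. -/
def riskBal {n : ℕ} (μ : Measure ℝ) (τ : ℝ → ℝ) (w a : Fin (n + 1) → ℝ)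
    (d : (Fin n → ℝ) → ℝ → ℝ) : ℝ :=
  ∫ x, (∫ t,
      (invEst w x t * (d x t - invEst a x t) ^ 2 +
        (1 - invEst w x t) * (d x t - τ (cdfOf μ t)) ^ 2) ∂μ)
    ∂(sampleMeasure n μ)

open ProbabilityTheory Polynomial
open scoped Nat

lemma integral_pow_mul_one_sub_pow (i m : ℕ) :
    ∫ u in (0 : ℝ)..1, u ^ i * (1 - u) ^ m = (i ! * m ! / (i + m + 1)! : ℝ) := by
  have h := Complex.betaIntegral_eq_Gamma_mul_div (i + 1) (m + 1) (by simp; positivity)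
    (by simp; positivity)
  rw [show (i + 1 + (m + 1) : ℂ) = ((i + m + 1 : ℕ) : ℂ) + 1 by push_cast; ring,
    Complex.Gamma_nat_eq_factorial, Complex.Gamma_nat_eq_factorial,
    Complex.Gamma_nat_eq_factorial, Complex.betaIntegral] at h
  simp only [add_sub_cancel_right, Complex.cpow_natCast] at h
  rw [← Complex.ofReal_inj, intervalIntegral.integral_ofReal.symm]
  push_cast
  exact h

lemma betaDen_eq_eval_bernsteinPolynomial (n i : ℕ) (u : ℝ) :
    betaDen n i u = (n + 1) * (bernsteinPolynomial ℝ n i).eval u := by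
  simp only [betaDen, bernsteinPolynomial, eval_mul, eval_natCast, eval_pow, eval_X, eval_sub,
    eval_one]
  ring

lemma integral_betaDen {n i : ℕ} (hi : i ≤ n) : ∫ u in Ioo (0 : ℝ) 1, betaDen n i u = 1 := by
  rw [← integral_Ioc_eq_integral_Ioo, ← intervalIntegral.integral_of_le zero_le_one]
  simp only [betaDen, mul_assoc, intervalIntegral.integral_const_mul,
    integral_pow_mul_one_sub_pow, Nat.add_sub_cancel' hi]
  rw [Nat.factorial_succ, Nat.choose_eq_factorial_div_factorial hi,
    Nat.cast_div (Nat.factorial_mul_factorial_dvd_factorial hi) (by positivity)]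
  field_simp
  push_cast
  ring

section ProbabilityIntegralTransform

variable {μ : Measure ℝ} [IsProbabilityMeasure μ]

lemma measure_preimage_cdf_Iic (hF : Continuous (cdf μ)) {u : ℝ} (hu0 : 0 ≤ u) (hu1 : u < 1) :
    μ (cdf μ ⁻¹' Iic u) = ENNReal.ofReal u := by
  set S := cdf μ ⁻¹' Iic u
  rcases S.eq_empty_or_nonempty with hS | hS
  · obtain rfl : u = 0 := by
      refine hu0.antisymm' (not_lt.1 fun hu => ?_)
      obtain ⟨t, ht⟩ := ((tendsto_cdf_atBot μ).eventually_lt_const hu).exists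
      exact hS.subset (show t ∈ S from ht.le)
    simp [hS]
  have hbdd : BddAbove S := by
    obtain ⟨t₀, ht₀⟩ := ((tendsto_cdf_atTop μ).eventually_const_lt hu1).exists
    exact ⟨t₀, fun t (ht : cdf μ t ≤ u) => ((monotone_cdf μ).reflect_lt (ht.trans_lt ht₀)).le⟩
  set s := sSup S
  have hs : s ∈ S := (isClosed_Iic.preimage hF).csSup_mem hS hbdd
  have hSs : S = Iic s :=
    Subset.antisymm (fun t ht => le_csSup hbdd ht) fun t ht => (monotone_cdf μ ht).trans hs
  -- right-continuity at `s`, since every `t > s` lies outside `S`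
  have hFs : cdf μ s = u := by
    refine le_antisymm hs (ge_of_tendsto (hF.continuousWithinAt (s := Ioi s) (x := s)) ?_)
    filter_upwards [self_mem_nhdsWithin] with t ht
    exact (not_le.1 fun (h : cdf μ t ≤ u) => (not_le.2 ht) (le_csSup hbdd h)).le
  rw [hSs, ← ofReal_cdf, hFs]

lemma map_cdf_eq_restrict_Ioo (hF : Continuous (cdf μ)) :
    μ.map (cdf μ) = volume.restrict (Ioo 0 1) := by
  refine Measure.ext_of_Iic _ _ fun u => ?_
  rw [Measure.map_apply hF.measurable measurableSet_Iic, Measure.restrict_apply measurableSet_Iic]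
  rcases lt_or_ge u 0 with hu0 | hu0
  · have hF0 : cdf μ ⁻¹' Iic u = ∅ :=
      eq_empty_of_forall_notMem fun t (ht : cdf μ t ≤ u) =>
        (ht.trans_lt hu0).not_ge (cdf_nonneg μ t)
    have hI0 : Iic u ∩ Ioo (0 : ℝ) 1 = ∅ :=
      eq_empty_of_forall_notMem fun t ht => (ht.1.trans_lt hu0).not_gt ht.2.1
    rw [hF0, hI0, measure_empty, measure_empty]
  rcases lt_or_ge u 1 with hu1 | hu1
  · have hI : Iic u ∩ Ioo 0 1 = Ioc 0 u := by
      ext t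
      exact ⟨fun ⟨htu, ht0, _⟩ => ⟨ht0, htu⟩, fun ⟨ht0, htu⟩ => ⟨htu, ht0, htu.trans_lt hu1⟩⟩
    rw [measure_preimage_cdf_Iic hF hu0 hu1, hI, Real.volume_Ioc, sub_zero]
  · have hF1 : cdf μ ⁻¹' Iic u = univ :=
      eq_univ_of_forall fun t => (cdf_le_one μ t).trans hu1
    rw [hF1, inter_eq_right.2 fun t ht => ht.2.le.trans hu1]
    simp

lemma integral_comp_cdf (hF : Continuous (cdf μ)) {ψ : ℝ → ℝ} (hψ : ContinuousOn ψ (Icc 0 1)) :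
    ∫ t, ψ (cdf μ t) ∂μ = ∫ u in Ioo 0 1, ψ u := by
  have hψ' : AEStronglyMeasurable ψ (μ.map (cdf μ)) := by
    rw [map_cdf_eq_restrict_Ioo hF]
    exact (hψ.mono Ioo_subset_Icc_self).aestronglyMeasurable measurableSet_Ioo
  rw [← integral_map hF.aemeasurable hψ', map_cdf_eq_restrict_Ioo hF]

end ProbabilityIntegralTransform

section SampleCount

variable {n : ℕ}

lemma measurable_countLE : Measurable fun p : (Fin n → ℝ) × ℝ => countLE p.1 p.2 := by
  have hval : Measurable fun p : (Fin n → ℝ) × ℝ => (countLE p.1 p.2 : ℕ) := by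
    simp only [countLE, Finset.card_filter]
    exact Finset.measurable_sum _ fun j _ =>
      Measurable.ite (measurableSet_le measurable_fst.eval measurable_snd)
        measurable_const measurable_const
  refine measurable_to_countable' fun i => ?_
  convert hval (measurableSet_singleton (i : ℕ)) using 1
  ext p
  simp [Fin.ext_iff]

lemma preimage_filter_le_eq_pi (t : ℝ) (S : Finset (Fin n)) :
    (fun x : Fin n → ℝ => Finset.univ.filter fun j => x j ≤ t) ⁻¹' {S} =
      univ.pi fun j => if j ∈ S then Iic t else Ioi t := by
  ext x
  simp only [mem_preimage, mem_singleton_iff, mem_univ_pi, Finset.ext_iff, Finset.mem_filter,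
    Finset.mem_univ, true_and]
  refine forall_congr' fun j => ?_
  by_cases hj : j ∈ S <;> simp [hj]

variable (μ : Measure ℝ) [IsProbabilityMeasure μ]

lemma measureReal_countLE_eq (t : ℝ) (i : Fin (n + 1)) :
    (Measure.pi fun _ => μ).real {x | countLE x t = i} =
      (bernsteinPolynomial ℝ n i).eval (cdf μ t) := by
  have hfib : {x : Fin n → ℝ | countLE x t = i} =
      (fun x : Fin n → ℝ => Finset.univ.filter fun j => x j ≤ t) ⁻¹'
        ((Finset.univ : Finset (Fin n)).powersetCard i : Set (Finset (Fin n))) := by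
    ext x
    simp [countLE, Fin.ext_iff]
  have hIoi : μ.real (Ioi t) = 1 - cdf μ t := by
    rw [← compl_Iic, probReal_compl_eq_one_sub measurableSet_Iic, cdf_eq_real]
  rw [hfib, ← sum_measureReal_preimage_singleton _ fun S _ => by
    rw [preimage_filter_le_eq_pi]
    exact MeasurableSet.univ_pi fun j => by split_ifs <;> measurability]
  have hS : ∀ S ∈ Finset.univ.powersetCard (i : ℕ),
      (Measure.pi fun _ => μ).real
        ((fun x : Fin n → ℝ => Finset.univ.filter fun j => x j ≤ t) ⁻¹' {S}) =
        cdf μ t ^ (i : ℕ) * (1 - cdf μ t) ^ (n - i) := by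
    intro S hS
    rw [Finset.mem_powersetCard] at hS
    rw [preimage_filter_le_eq_pi, measureReal_def, Measure.pi_pi, ENNReal.toReal_prod]
    simp only [apply_ite, ← measureReal_def, Finset.prod_ite, Finset.prod_const, hIoi, cdf_eq_real]
    simp [Finset.filter_not, Finset.card_sdiff, hS.2]
  rw [Finset.sum_congr rfl hS]
  simp [bernsteinPolynomial, mul_assoc]

lemma integral_comp_countLE (t : ℝ) (f : Fin (n + 1) → ℝ) :
    ∫ x, f (countLE x t) ∂(Measure.pi fun _ => μ) =
      ∑ i : Fin (n + 1), (bernsteinPolynomial ℝ n i).eval (cdf μ t) * f i := by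
  have hm : Measurable fun x : Fin n → ℝ => countLE x t :=
    measurable_countLE.comp (measurable_id.prodMk measurable_const)
  rw [← integral_map hm.aemeasurable (measurable_of_countable f).aestronglyMeasurable,
    integral_fintype .of_finite]
  refine Finset.sum_congr rfl fun i _ => ?_
  rw [smul_eq_mul, map_measureReal_apply hm (measurableSet_singleton i)]
  exact congrArg (· * f i) (measureReal_countLE_eq μ t i)

lemma integral_integral_comp_countLE_cdf (hF : Continuous (cdf μ)) (Φ : Fin (n + 1) → ℝ → ℝ)
    (hΦ : ∀ i, ContinuousOn (Φ i) (Icc 0 1)) :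
    ∫ x, ∫ t, Φ (countLE x t) (cdf μ t) ∂μ ∂(Measure.pi fun _ => μ) =
      ∑ i : Fin (n + 1), ∫ u in Ioo 0 1, (bernsteinPolynomial ℝ n i).eval u * Φ i u := by
  have hcdf : ∀ t, cdf μ t ∈ Icc 0 1 := fun t => ⟨cdf_nonneg μ t, cdf_le_one μ t⟩
  have hmeas : Measurable fun p : (Fin n → ℝ) × ℝ => Φ (countLE p.1 p.2) (cdf μ p.2) :=
    (measurable_from_prod_countable_left (f := fun q : ℝ × Fin (n + 1) => Φ q.2 (cdf μ q.1))
      fun i => ((hΦ i).comp_continuous hF hcdf).measurable).comp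
      (measurable_snd.prodMk measurable_countLE)
  obtain ⟨C, hC⟩ : ∃ C, ∀ i, ∀ u ∈ Icc (0 : ℝ) 1, ‖Φ i u‖ ≤ C := by
    choose C hC using fun i => isCompact_Icc.exists_bound_of_continuousOn (hΦ i)
    exact ⟨∑ i, |C i|, fun i u hu => (hC i u hu).trans <| (le_abs_self _).trans <|
      Finset.single_le_sum (fun j _ => abs_nonneg (C j)) (Finset.mem_univ i)⟩
  have hint : Integrable (Function.uncurry fun x t => Φ (countLE x t) (cdf μ t))
      ((Measure.pi fun _ => μ).prod μ) :=
    .of_bound hmeas.aestronglyMeasurable C (.of_forall fun p => hC _ _ (hcdf p.2))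
  have hB : ∀ i : Fin (n + 1),
      ContinuousOn (fun u => (bernsteinPolynomial ℝ n i).eval u * Φ i u) (Icc 0 1) :=
    fun i => (Polynomial.continuousOn _).mul (hΦ i)
  rw [integral_integral_swap hint]
  simp_rw [fun t => integral_comp_countLE μ t fun i => Φ i (cdf μ t)]
  rw [integral_comp_cdf hF (continuousOn_finsetSum _ fun i _ => hB i),
    integral_finsetSum _ fun i _ => ((hB i).integrableOn_Icc).mono_set Ioo_subset_Icc_self]

end SampleCount

def balancedLoss (w a v y : ℝ) : ℝ := w * (v - a) ^ 2 + (1 - w) * (v - y) ^ 2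

section BalancedLoss

variable {α : Type*} [MeasurableSpace α] {ν : Measure α} {ρ Y : α → ℝ}

lemma integral_balancedLoss_mul (hρ : Integrable ρ ν) (hYρ : Integrable (fun x => Y x * ρ x) ν)
    (hY2ρ : Integrable (fun x => Y x ^ 2 * ρ x) ν) (w a c : ℝ) :
    ∫ x, balancedLoss w a c (Y x) * ρ x ∂ν =
      (w * (c - a) ^ 2 + (1 - w) * c ^ 2) * ∫ x, ρ x ∂ν - 2 * (1 - w) * c * ∫ x, Y x * ρ x ∂ν +
        (1 - w) * ∫ x, Y x ^ 2 * ρ x ∂ν := by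
  have hexpand : (fun x => balancedLoss w a c (Y x) * ρ x) = fun x =>
      (w * (c - a) ^ 2 + (1 - w) * c ^ 2) * ρ x - 2 * (1 - w) * c * (Y x * ρ x) +
        (1 - w) * (Y x ^ 2 * ρ x) := by
    funext x
    simp only [balancedLoss]
    ring
  rw [hexpand, integral_add (by fun_prop) (by fun_prop), integral_sub (by fun_prop) (by fun_prop),
    integral_const_mul, integral_const_mul, integral_const_mul]

lemma integral_balancedLoss_mul_eq_add (hρ : Integrable ρ ν)
    (hYρ : Integrable (fun x => Y x * ρ x) ν) (hY2ρ : Integrable (fun x => Y x ^ 2 * ρ x) ν)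
    (hρ1 : ∫ x, ρ x ∂ν = 1) (w a v : ℝ) :
    ∫ x, balancedLoss w a v (Y x) * ρ x ∂ν =
      ∫ x, balancedLoss w a (w * a + (1 - w) * ∫ x, Y x * ρ x ∂ν) (Y x) * ρ x ∂ν +
        (v - (w * a + (1 - w) * ∫ x, Y x * ρ x ∂ν)) ^ 2 := by
  rw [integral_balancedLoss_mul hρ hYρ hY2ρ, integral_balancedLoss_mul hρ hYρ hY2ρ, hρ1]
  ring

end BalancedLoss

section Risk

variable {n : ℕ} {τ : ℝ → ℝ}

lemma integral_balancedLoss_mul_betaDen_eq_add (hτ : ContinuousOn τ (Icc 0 1))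
    (i : Fin (n + 1)) (w a v : ℝ) :
    ∫ u in Ioo 0 1, balancedLoss w a v (τ u) * betaDen n i u =
      (∫ u in Ioo 0 1, balancedLoss w a (w * a + (1 - w) * betaMean n τ i) (τ u) * betaDen n i u) +
        (v - (w * a + (1 - w) * betaMean n τ i)) ^ 2 := by
  have hρ : ContinuousOn (betaDen n i) (Icc 0 1) := by
    unfold betaDen
    fun_prop
  have hint : ∀ f : ℝ → ℝ, ContinuousOn f (Icc 0 1) →
      IntegrableOn (fun u => f u * betaDen n i u) (Ioo 0 1) := fun f hf =>
    ((hf.mul hρ).integrableOn_Icc).mono_set Ioo_subset_Icc_self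
  exact integral_balancedLoss_mul_eq_add
    (((hρ.integrableOn_Icc).mono_set Ioo_subset_Icc_self)) (hint τ hτ) (hint _ (hτ.pow 2))
    (integral_betaDen i.is_le) w a v

variable {μ : Measure ℝ} [IsProbabilityMeasure μ]

lemma riskBal_invEst_eq (hF : Continuous (cdfOf μ)) (hτ : ContinuousOn τ (Icc 0 1))
    (w a v : Fin (n + 1) → ℝ) :
    riskBal μ τ w a (invEst v) =
      ∑ i, (∫ u in Ioo 0 1, balancedLoss (w i) (a i) (v i) (τ u) * betaDen n i u) / (n + 1) := by
  have hcdf : cdfOf μ = cdf μ := funext fun t => by rw [cdfOf, cdf_eq_real, measureReal_def]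
  rw [hcdf] at hF
  simp only [riskBal, invEst, hcdf]
  refine (integral_integral_comp_countLE_cdf μ hF (fun i u => balancedLoss (w i) (a i) (v i) (τ u))
    fun i => by unfold balancedLoss; fun_prop).trans (Finset.sum_congr rfl fun i _ => ?_)
  rw [← integral_div]
  refine setIntegral_congr_fun measurableSet_Ioo fun u _ => ?_
  rw [betaDen_eq_eval_bernsteinPolynomial]
  field_simp

lemma riskBal_invEst_eq_add (hF : Continuous (cdfOf μ)) (hτ : ContinuousOn τ (Icc 0 1))
    (w a v : Fin (n + 1) → ℝ) :
    riskBal μ τ w a (invEst v) =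
      riskBal μ τ w a (invEst fun i => w i * a i + (1 - w i) * betaMean n τ i) +
        ∑ i, (v i - (w i * a i + (1 - w i) * betaMean n τ i)) ^ 2 / (n + 1) := by
  rw [riskBal_invEst_eq hF hτ, riskBal_invEst_eq hF hτ, ← Finset.sum_add_distrib]
  refine Finset.sum_congr rfl fun i _ => ?_
  rw [integral_balancedLoss_mul_betaDen_eq_add hτ, add_div]

end Risk

theorem balanced_best_invariant_general
    {n : ℕ}
    (τ : ℝ → ℝ) (hτc : ContinuousOn τ (Set.Icc 0 1))
    (a : Fin (n + 1) → ℝ) (w : Fin (n + 1) → ℝ)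
    (v : Fin (n + 1) → ℝ) :
    (∀ (μ₁ μ₂ : Measure ℝ), IsProbabilityMeasure μ₁ → Continuous (cdfOf μ₁) →
      IsProbabilityMeasure μ₂ → Continuous (cdfOf μ₂) →
      riskBal μ₁ τ w a (invEst v) = riskBal μ₂ τ w a (invEst v)) ∧
    (∀ (μ : Measure ℝ), IsProbabilityMeasure μ → Continuous (cdfOf μ) →
      riskBal μ τ w a (invEst (fun i => w i * a i + (1 - w i) * betaMean n τ i)) ≤
        riskBal μ τ w a (invEst v) ∧
      (riskBal μ τ w a (invEst v) =
          riskBal μ τ w a (invEst (fun i => w i * a i + (1 - w i) * betaMean n τ i)) ↔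
        ∀ i, v i = w i * a i + (1 - w i) * betaMean n τ i)) := by
  refine ⟨fun μ₁ μ₂ _ hF₁ _ hF₂ => ?_, fun μ _ hF => ?_⟩
  · rw [riskBal_invEst_eq hF₁ hτc, riskBal_invEst_eq hF₂ hτc]
  have hsq : ∀ i, 0 ≤ (v i - (w i * a i + (1 - w i) * betaMean n τ i)) ^ 2 / (n + 1) :=
    fun i => by positivity
  rw [riskBal_invEst_eq_add hF hτc w a v]
  refine ⟨le_add_of_nonneg_right (Finset.sum_nonneg fun i _ => hsq i), ?_⟩
  rw [add_eq_left, Finset.sum_eq_zero_iff_of_nonneg fun i _ => hsq i]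
  simp [sub_eq_zero, Nat.cast_add_one_ne_zero]

/-- for invariant target `d₀` (weights `a_i`) and invariant
weight `w` (with `w_i ∈ (0,1]`), every invariant estimator has balanced risk
constant in `F`, minimized uniquely by
`d_w* = w·d₀ + (1−w)·d₀*` with weights `w_i·a_i + (1−w_i)·E[τ(T_i)]`. -/
theorem balanced_best_invariant
    {n : ℕ} (hn : 1 ≤ n)
    (τ : ℝ → ℝ) (hτc : ContinuousOn τ (Set.Icc 0 1))
    (hτm : StrictMonoOn τ (Set.Icc 0 1))
    (a : Fin (n + 1) → ℝ) (w : Fin (n + 1) → ℝ) (hw : ∀ i, w i ∈ Set.Ioc (0 : ℝ) 1)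
    (v : Fin (n + 1) → ℝ) :
    (∀ (μ₁ μ₂ : Measure ℝ), IsProbabilityMeasure μ₁ → Continuous (cdfOf μ₁) →
      IsProbabilityMeasure μ₂ → Continuous (cdfOf μ₂) →
      riskBal μ₁ τ w a (invEst v) = riskBal μ₂ τ w a (invEst v)) ∧
    (∀ (μ : Measure ℝ), IsProbabilityMeasure μ → Continuous (cdfOf μ) →
      riskBal μ τ w a (invEst (fun i => w i * a i + (1 - w i) * betaMean n τ i)) ≤
        riskBal μ τ w a (invEst v) ∧
      (riskBal μ τ w a (invEst v) =
          riskBal μ τ w a (invEst (fun i => w i * a i + (1 - w i) * betaMean n τ i)) ↔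
        ∀ i, v i = w i * a i + (1 - w i) * betaMean n τ i)) :=
  balanced_best_invariant_general τ hτc a w v

end
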